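/- arXiv:1109.3306 — 6 statements merged into one kernel-verified Lean document; each statement's English description precedes it below -/
import Mathlib

section
/- With notation as in the context, if φ is a Tu–Čech 1-cocycle, then its value does not depend on the arrow index: for all λ₀, λ₁ ∈ I⁰, all λ₀₁, λ₀₁' ∈ I¹, and all (g,x) ∈ U¹_{λ₀λ₁λ₀₁} ∩ U¹_{λ₀λ₁λ₀₁'}, one has φ_{λ₀λ₁λ₀₁}(g,x) = φ_{λ₀λ₁λ₀₁'}(g,x). Moreover φ_{λ₁λ₁λ₁₂}(e,x) = 1 whenever (e,x) ∈ U¹_{λ₁λ₁λ₁₂}. -/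
/-- A Tu–Čech 1-cocycle `φ` on the transformation groupoid `G ⋉ X`,
relative to covers `U⁰` of `X` and `U¹` of `G × X`, does not depend on the choice of the
arrow index: `φ_{λ₀λ₁λ₀₁}(g,x) = φ_{λ₀λ₁λ₀₁'}(g,x)` whenever both are defined; moreover
`φ_{λ₁λ₁λ₁₂}(e,x) = 1`. -/
theorem one_cocycle_arrow_index_independent {G X I0 I1 : Type*} [Group G] [MulAction G X]
    (U0 : I0 → Set X) (U1 : I1 → Set (G × X))
    (hU0 : ∀ x : X, ∃ i, x ∈ U0 i) (hU1 : ∀ p : G × X, ∃ j, p ∈ U1 j)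
    (φ : I0 → I0 → I1 → G × X → Circle)
    (hcoc : ∀ (l0 l1 l2 : I0) (l01 l02 l12 : I1) (g h : G) (x : X),
      g⁻¹ • (h⁻¹ • x) ∈ U0 l0 → h⁻¹ • x ∈ U0 l1 → x ∈ U0 l2 →
      (g, h⁻¹ • x) ∈ U1 l01 → (g * h, x) ∈ U1 l02 → (h, x) ∈ U1 l12 →
      φ l1 l2 l12 (h, x) * (φ l0 l2 l02 (g * h, x))⁻¹ * φ l0 l1 l01 (g, h⁻¹ • x) = 1) :
    (∀ (l0 l1 : I0) (l01 l01' : I1) (g : G) (x : X),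
      g⁻¹ • x ∈ U0 l0 → x ∈ U0 l1 → (g, x) ∈ U1 l01 → (g, x) ∈ U1 l01' →
      φ l0 l1 l01 (g, x) = φ l0 l1 l01' (g, x)) ∧
    (∀ (l1 : I0) (l12 : I1) (x : X), x ∈ U0 l1 → ((1 : G), x) ∈ U1 l12 →
      φ l1 l1 l12 (1, x) = 1) := by
  have hid : ∀ (l1 : I0) (l12 : I1) (x : X), x ∈ U0 l1 → ((1 : G), x) ∈ U1 l12 →
      φ l1 l1 l12 (1, x) = 1 := by
    intro l1 l12 x hx hgx
    have := hcoc l1 l1 l1 l12 l12 l12 1 1 x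
      (by simpa using hx) (by simpa using hx) hx
      (by simpa using hgx) (by simpa using hgx) hgx
    simp only [inv_one, one_smul, mul_one] at this
    group at this
    simpa using this
  refine ⟨?_, hid⟩
  intro l0 l1 l01 l01' g x h0 h1 hA hB
  obtain ⟨l12, hl12⟩ := hU1 (1, x)
  have := hcoc l0 l1 l1 l01 l01' l12 g 1 x
    (by simpa using h0) (by simpa using h1) h1
    (by simpa using hA) (by simpa using hB) hl12
  rw [hid l1 l12 x h1 hl12] at this
  simp only [inv_one, one_smul, mul_one, one_mul] at this
  have := mul_eq_one_iff_eq_inv.mp this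
  exact (inv_injective this).symm
end

section
/- Let G be an abelian group acting on a set X, and H a complex Hilbert space. Let S₀, S₁, S₂ ⊆ X be G-invariant subsets, let u_λ : G × S_λ → U(H) (λ ∈ {0,1,2}) satisfy u_λ(g₁g₀, x) = u_λ(g₁, x)·u_λ(g₀, g₁⁻¹·x) for all g₀, g₁ ∈ G and x ∈ S_λ, and let v₀₁ : S₀∩S₁ → U(H), v₁₂ : S₁∩S₂ → U(H), v₀₂ : S₀∩S₂ → U(H). Assume that for each pair (λ,μ) ∈ {(0,1),(1,2),(0,2)}, each g ∈ G and each x ∈ S_λ∩S_μ the operator η_{λμ}(g,x) := u_μ(g,x)·v_{λμ}(g⁻¹·x)·u_λ(g,x)*·v_{λμ}(x)* is a scalar unitary (a modulus-1 multiple of the identity), and that for each x ∈ S₀∩S₁∩S₂ the operator ν(x) := v₁₂(x)·v₀₁(x)·v₀₂(x)* is a scalar unitary. Then: (a) for all g₁ ∈ G and x ∈ S₀∩S₁∩S₂: η₀₁(g₁,x)·η₁₂(g₁,x)·η₀₂(g₁,x)⁻¹ = ν(x)⁻¹·ν(g₁⁻¹·x); and (b) for all g₀, g₁ ∈ G and x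 ∈ S₀∩S₁: η₀₁(g₁,x)·η₀₁(g₀g₁,x)⁻¹·η₀₁(g₀, g₁⁻¹·x) = 1. -/
/-- The operator `η_{λμ}(g,x) = u_μ(g,x) · v_{λμ}(g⁻¹x) · u_λ(g,x)* · v_{λμ}(x)*`. -/
noncomputable def etaOp {G X H : Type*} [Group G] [MulAction G X]
    [NormedAddCommGroup H] [InnerProductSpace ℂ H] [CompleteSpace H]
    (ua ub : G → X → (H →L[ℂ] H)) (v : X → (H →L[ℂ] H)) (g : G) (x : X) : H →L[ℂ] H :=
  ub g x * v (g⁻¹ • x) * star (ua g x) * star (v x)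

/-- The operator `ν(x) = v₁₂(x) · v₀₁(x) · v₀₂(x)*`. -/
noncomputable def nuOp {X H : Type*}
    [NormedAddCommGroup H] [InnerProductSpace ℂ H] [CompleteSpace H]
    (v01 v12 v02 : X → (H →L[ℂ] H)) (x : X) : H →L[ℂ] H :=
  v12 x * v01 x * star (v02 x)

/-!
Inside the unitary group, the hypotheses say that `η_{λμ}(g,x)` and `ν(x)` are central. Writing
`u_μ v_{λμ}(g⁻¹x) u_λ⁻¹ = η_{λμ} v_{λμ}(x)`, conjugating `ν(g⁻¹x)` by `u₂` gives
`η₁₂ η₀₁ η₀₂⁻¹ ν(x)`, and conjugation fixes central elements; this is (a). For (b), the cocycle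
identities of `u₀` and `u₁` (with `G` abelian, so `(g₀g₁)⁻¹x = g₀⁻¹g₁⁻¹x`) express
`η₀₁(g₀g₁, x)` as `η₀₁(g₀, g₁⁻¹x) η₀₁(g₁, x)`.
-/

open Subgroup (center mem_center_iff)

section CentralTwist

variable {M : Type*} [Group M]

theorem cech_coboundary_twist_eq_of_mem_center {u0 u1 u2 v01 v12 v02 v01' v12' v02' : M}
    (h01 : u1 * v01' * u0⁻¹ * v01⁻¹ ∈ center M) (h12 : u2 * v12' * u1⁻¹ * v12⁻¹ ∈ center M)
    (h02 : u2 * v02' * u0⁻¹ * v02⁻¹ ∈ center M) (hν : v12 * v01 * v02⁻¹ ∈ center M) :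
    (u1 * v01' * u0⁻¹ * v01⁻¹) * (u2 * v12' * u1⁻¹ * v12⁻¹) * (u2 * v02' * u0⁻¹ * v02⁻¹)⁻¹ =
      (v12 * v01 * v02⁻¹)⁻¹ * (v12' * v01' * v02'⁻¹) := by
  obtain ⟨e01, he01, rfl⟩ : ∃ e ∈ center M, v01' = u1⁻¹ * e * v01 * u0 := ⟨_, h01, by group⟩
  obtain ⟨e12, he12, rfl⟩ : ∃ e ∈ center M, v12' = u2⁻¹ * e * v12 * u1 := ⟨_, h12, by group⟩
  obtain ⟨e02, he02, rfl⟩ : ∃ e ∈ center M, v02' = u2⁻¹ * e * v02 * u0 := ⟨_, h02, by group⟩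
  obtain ⟨n, hn, rfl⟩ : ∃ n ∈ center M, v12 = n * v02 * v01⁻¹ := ⟨_, hν, by group⟩
  have hc : e12 * (e01 * n) * e02⁻¹ ∈ center M :=
    mul_mem (mul_mem he12 (mul_mem he01 hn)) (inv_mem he02)
  calc _ = e01 * e12 * e02⁻¹ := by group
    _ = n⁻¹ * (e12 * (e01 * n) * e02⁻¹) := by
      rw [mem_center_iff.mp hn e01, ← mul_assoc e12, mem_center_iff.mp hn e12,
        ← mem_center_iff.mp he01 e12]
      group
    _ = n⁻¹ * (u2⁻¹ * (e12 * (e01 * n) * e02⁻¹) * u2) := by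
      rw [mul_assoc u2⁻¹, ← mem_center_iff.mp hc u2, inv_mul_cancel_left]
    _ = n⁻¹ * (u2⁻¹ * (e12 * (n * v02 * v01⁻¹ * e01) * v01 * v02⁻¹ * e02⁻¹) * u2) := by
      rw [mem_center_iff.mp he01 (n * v02 * v01⁻¹)]
      group
    _ = _ := by group

theorem group_coboundary_twist_eq_one_of_mem_center {a a' b b' w w' w'' : M}
    (h : b' * w'' * b⁻¹ * w'⁻¹ ∈ center M) :
    (a' * w' * a⁻¹ * w⁻¹) * (a' * b' * w'' * (a * b)⁻¹ * w⁻¹)⁻¹ * (b' * w'' * b⁻¹ * w'⁻¹) = 1 := by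
  obtain ⟨e, he, rfl⟩ : ∃ e ∈ center M, w'' = b'⁻¹ * e * w' * b := ⟨_, h, by group⟩
  calc _ = (a' * w' * a⁻¹ * w⁻¹) * (a' * e * (w' * a⁻¹ * w⁻¹))⁻¹ * e := by group
    _ = 1 := by rw [mem_center_iff.mp he a']; group

end CentralTwist

theorem smul_one_mem_center {R A : Type*} [CommSemiring R] [Semiring A] [Algebra R A] (r : R) :
    r • (1 : A) ∈ Set.center A :=
  Algebra.algebraMap_eq_smul_one (A := A) r ▸ Set.algebraMap_mem_center r

section Unitary

variable {R : Type*} [Monoid R] [StarMul R]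

theorem Unitary.mem_center_of_coe_mem_center {U : unitary R} (h : (U : R) ∈ Set.center R) :
    U ∈ center (unitary R) :=
  mem_center_iff.mpr fun g => Subtype.ext (Semigroup.mem_center_iff.mp h g)

theorem cech_coboundary_twist_eq_of_mem_unitary {u0 u1 u2 v01 v12 v02 v01' v12' v02' : R}
    (hu0 : u0 ∈ unitary R) (hu1 : u1 ∈ unitary R) (hu2 : u2 ∈ unitary R)
    (hv01 : v01 ∈ unitary R) (hv12 : v12 ∈ unitary R) (hv02 : v02 ∈ unitary R)
    (hv01' : v01' ∈ unitary R) (hv12' : v12' ∈ unitary R) (hv02' : v02' ∈ unitary R)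
    (h01 : u1 * v01' * star u0 * star v01 ∈ Set.center R)
    (h12 : u2 * v12' * star u1 * star v12 ∈ Set.center R)
    (h02 : u2 * v02' * star u0 * star v02 ∈ Set.center R)
    (hν : v12 * v01 * star v02 ∈ Set.center R) :
    (u1 * v01' * star u0 * star v01) * (u2 * v12' * star u1 * star v12) *
        star (u2 * v02' * star u0 * star v02) =
      star (v12 * v01 * star v02) * (v12' * v01' * star v02') := by
  lift u0 to unitary R using hu0
  lift u1 to unitary R using hu1
  lift u2 to unitary R using hu2
  lift v01 to unitary R using hv01
  lift v12 to unitary R using hv12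
  lift v02 to unitary R using hv02
  lift v01' to unitary R using hv01'
  lift v12' to unitary R using hv12'
  lift v02' to unitary R using hv02'
  exact congrArg Subtype.val <| cech_coboundary_twist_eq_of_mem_center
    (Unitary.mem_center_of_coe_mem_center h01) (Unitary.mem_center_of_coe_mem_center h12)
    (Unitary.mem_center_of_coe_mem_center h02) (Unitary.mem_center_of_coe_mem_center hν)

theorem group_coboundary_twist_eq_one_of_mem_unitary {a a' b b' w w' w'' : R}
    (ha : a ∈ unitary R) (ha' : a' ∈ unitary R) (hb : b ∈ unitary R) (hb' : b' ∈ unitary R)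
    (hw : w ∈ unitary R) (hw' : w' ∈ unitary R) (hw'' : w'' ∈ unitary R)
    (h : b' * w'' * star b * star w' ∈ Set.center R) :
    (a' * w' * star a * star w) * star (a' * b' * w'' * star (a * b) * star w) *
      (b' * w'' * star b * star w') = 1 := by
  lift a to unitary R using ha
  lift a' to unitary R using ha'
  lift b to unitary R using hb
  lift b' to unitary R using hb'
  lift w to unitary R using hw
  lift w' to unitary R using hw'
  lift w'' to unitary R using hw''
  exact congrArg Subtype.val <| group_coboundary_twist_eq_one_of_mem_center
    (Unitary.mem_center_of_coe_mem_center h)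

end Unitary

theorem rw_equivariant_cocycle_general {G X H : Type*} [CommGroup G] [MulAction G X]
    [NormedAddCommGroup H] [InnerProductSpace ℂ H] [CompleteSpace H]
    (S0 S1 S2 : Set X)
    (hS0 : ∀ (g : G) (x : X), x ∈ S0 → g • x ∈ S0)
    (hS1 : ∀ (g : G) (x : X), x ∈ S1 → g • x ∈ S1)
    (hS2 : ∀ (g : G) (x : X), x ∈ S2 → g • x ∈ S2)
    (u0 u1 u2 : G → X → (H →L[ℂ] H))
    (hu0 : ∀ (g : G) (x : X), x ∈ S0 → u0 g x ∈ unitary (H →L[ℂ] H))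
    (hu1 : ∀ (g : G) (x : X), x ∈ S1 → u1 g x ∈ unitary (H →L[ℂ] H))
    (hu2 : ∀ (g : G) (x : X), x ∈ S2 → u2 g x ∈ unitary (H →L[ℂ] H))
    (hcoc0 : ∀ (g0 g1 : G) (x : X), x ∈ S0 → u0 (g1 * g0) x = u0 g1 x * u0 g0 (g1⁻¹ • x))
    (hcoc1 : ∀ (g0 g1 : G) (x : X), x ∈ S1 → u1 (g1 * g0) x = u1 g1 x * u1 g0 (g1⁻¹ • x))
    (v01 v12 v02 : X → (H →L[ℂ] H))
    (hv01 : ∀ x ∈ S0 ∩ S1, v01 x ∈ unitary (H →L[ℂ] H))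
    (hv12 : ∀ x ∈ S1 ∩ S2, v12 x ∈ unitary (H →L[ℂ] H))
    (hv02 : ∀ x ∈ S0 ∩ S2, v02 x ∈ unitary (H →L[ℂ] H))
    (hη01 : ∀ (g : G), ∀ x ∈ S0 ∩ S1,
      ∃ c : ℂ, ‖c‖ = 1 ∧ etaOp u0 u1 v01 g x = c • (1 : H →L[ℂ] H))
    (hη12 : ∀ (g : G), ∀ x ∈ S1 ∩ S2,
      ∃ c : ℂ, ‖c‖ = 1 ∧ etaOp u1 u2 v12 g x = c • (1 : H →L[ℂ] H))
    (hη02 : ∀ (g : G), ∀ x ∈ S0 ∩ S2,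
      ∃ c : ℂ, ‖c‖ = 1 ∧ etaOp u0 u2 v02 g x = c • (1 : H →L[ℂ] H))
    (hν : ∀ x ∈ S0 ∩ S1 ∩ S2,
      ∃ c : ℂ, ‖c‖ = 1 ∧ nuOp v01 v12 v02 x = c • (1 : H →L[ℂ] H)) :
    (∀ (g1 : G), ∀ x ∈ S0 ∩ S1 ∩ S2,
      etaOp u0 u1 v01 g1 x * etaOp u1 u2 v12 g1 x * star (etaOp u0 u2 v02 g1 x) =
        star (nuOp v01 v12 v02 x) * nuOp v01 v12 v02 (g1⁻¹ • x)) ∧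
    (∀ (g0 g1 : G), ∀ x ∈ S0 ∩ S1,
      etaOp u0 u1 v01 g1 x * star (etaOp u0 u1 v01 (g0 * g1) x) *
        etaOp u0 u1 v01 g0 (g1⁻¹ • x) = 1) := by
  have central {T : H →L[ℂ] H} (hT : ∃ c : ℂ, ‖c‖ = 1 ∧ T = c • 1) : T ∈ Set.center _ := by
    obtain ⟨c, -, rfl⟩ := hT
    exact smul_one_mem_center c
  refine ⟨fun g1 x ⟨⟨hx0, hx1⟩, hx2⟩ => ?_, fun g0 g1 x ⟨hx0, hx1⟩ => ?_⟩
  · have hy0 := hS0 g1⁻¹ x hx0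
    have hy1 := hS1 g1⁻¹ x hx1
    have hy2 := hS2 g1⁻¹ x hx2
    exact cech_coboundary_twist_eq_of_mem_unitary (hu0 g1 x hx0) (hu1 g1 x hx1) (hu2 g1 x hx2)
      (hv01 x ⟨hx0, hx1⟩) (hv12 x ⟨hx1, hx2⟩) (hv02 x ⟨hx0, hx2⟩)
      (hv01 _ ⟨hy0, hy1⟩) (hv12 _ ⟨hy1, hy2⟩) (hv02 _ ⟨hy0, hy2⟩)
      (central (hη01 g1 x ⟨hx0, hx1⟩)) (central (hη12 g1 x ⟨hx1, hx2⟩))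
      (central (hη02 g1 x ⟨hx0, hx2⟩)) (central (hν x ⟨⟨hx0, hx1⟩, hx2⟩))
  · set y := g1⁻¹ • x
    have hy0 := hS0 g1⁻¹ x hx0
    have hy1 := hS1 g1⁻¹ x hx1
    have hinv : (g0 * g1)⁻¹ • x = g0⁻¹ • y := by rw [mul_comm, mul_inv_rev, mul_smul]
    have hc0 : u0 (g0 * g1) x = u0 g1 x * u0 g0 y := mul_comm g1 g0 ▸ hcoc0 g0 g1 x hx0
    have hc1 : u1 (g0 * g1) x = u1 g1 x * u1 g0 y := mul_comm g1 g0 ▸ hcoc1 g0 g1 x hx1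
    unfold etaOp
    rw [hinv, hc0, hc1]
    exact group_coboundary_twist_eq_one_of_mem_unitary (hu0 g1 x hx0) (hu1 g1 x hx1)
      (hu0 g0 y hy0) (hu1 g0 y hy1) (hv01 x ⟨hx0, hx1⟩) (hv01 y ⟨hy0, hy1⟩)
      (hv01 _ ⟨hS0 g0⁻¹ y hy0, hS1 g0⁻¹ y hy1⟩) (central (hη01 g0 y ⟨hy0, hy1⟩))

/-- The pair `(ν, η)` built from local implementing unitaries of an
equivariant system is a cocycle for the Raeburn–Williams equivariant complex:
(a) `η₀₁·η₁₂·η₀₂⁻¹ = ν⁻¹·(ν ∘ g₁⁻¹)` on `S₀ ∩ S₁ ∩ S₂`, and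
(b) `η₀₁(g₁,x)·η₀₁(g₀g₁,x)⁻¹·η₀₁(g₀,g₁⁻¹x) = 1` on `S₀ ∩ S₁`. -/
theorem rw_equivariant_cocycle {G X H : Type*} [CommGroup G] [MulAction G X]
    [NormedAddCommGroup H] [InnerProductSpace ℂ H] [CompleteSpace H]
    (S0 S1 S2 : Set X)
    (hS0 : ∀ (g : G) (x : X), x ∈ S0 → g • x ∈ S0)
    (hS1 : ∀ (g : G) (x : X), x ∈ S1 → g • x ∈ S1)
    (hS2 : ∀ (g : G) (x : X), x ∈ S2 → g • x ∈ S2)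
    (u0 u1 u2 : G → X → (H →L[ℂ] H))
    (hu0 : ∀ (g : G) (x : X), x ∈ S0 → u0 g x ∈ unitary (H →L[ℂ] H))
    (hu1 : ∀ (g : G) (x : X), x ∈ S1 → u1 g x ∈ unitary (H →L[ℂ] H))
    (hu2 : ∀ (g : G) (x : X), x ∈ S2 → u2 g x ∈ unitary (H →L[ℂ] H))
    (hcoc0 : ∀ (g0 g1 : G) (x : X), x ∈ S0 → u0 (g1 * g0) x = u0 g1 x * u0 g0 (g1⁻¹ • x))
    (hcoc1 : ∀ (g0 g1 : G) (x : X), x ∈ S1 → u1 (g1 * g0) x = u1 g1 x * u1 g0 (g1⁻¹ • x))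
    (hcoc2 : ∀ (g0 g1 : G) (x : X), x ∈ S2 → u2 (g1 * g0) x = u2 g1 x * u2 g0 (g1⁻¹ • x))
    (v01 v12 v02 : X → (H →L[ℂ] H))
    (hv01 : ∀ x ∈ S0 ∩ S1, v01 x ∈ unitary (H →L[ℂ] H))
    (hv12 : ∀ x ∈ S1 ∩ S2, v12 x ∈ unitary (H →L[ℂ] H))
    (hv02 : ∀ x ∈ S0 ∩ S2, v02 x ∈ unitary (H →L[ℂ] H))
    (hη01 : ∀ (g : G), ∀ x ∈ S0 ∩ S1,
      ∃ c : ℂ, ‖c‖ = 1 ∧ etaOp u0 u1 v01 g x = c • (1 : H →L[ℂ] H))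
    (hη12 : ∀ (g : G), ∀ x ∈ S1 ∩ S2,
      ∃ c : ℂ, ‖c‖ = 1 ∧ etaOp u1 u2 v12 g x = c • (1 : H →L[ℂ] H))
    (hη02 : ∀ (g : G), ∀ x ∈ S0 ∩ S2,
      ∃ c : ℂ, ‖c‖ = 1 ∧ etaOp u0 u2 v02 g x = c • (1 : H →L[ℂ] H))
    (hν : ∀ x ∈ S0 ∩ S1 ∩ S2,
      ∃ c : ℂ, ‖c‖ = 1 ∧ nuOp v01 v12 v02 x = c • (1 : H →L[ℂ] H)) :
    (∀ (g1 : G), ∀ x ∈ S0 ∩ S1 ∩ S2,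
      etaOp u0 u1 v01 g1 x * etaOp u1 u2 v12 g1 x * star (etaOp u0 u2 v02 g1 x) =
        star (nuOp v01 v12 v02 x) * nuOp v01 v12 v02 (g1⁻¹ • x)) ∧
    (∀ (g0 g1 : G), ∀ x ∈ S0 ∩ S1,
      etaOp u0 u1 v01 g1 x * star (etaOp u0 u1 v01 (g0 * g1) x) *
        etaOp u0 u1 v01 g0 (g1⁻¹ • x) = 1) :=
  rw_equivariant_cocycle_general S0 S1 S2 hS0 hS1 hS2 u0 u1 u2 hu0 hu1 hu2 hcoc0 hcoc1 v01 v12 v02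
    hv01 hv12 hv02 hη01 hη12 hη02 hν
end

section
/- Let G be an abelian group with identity e acting on a set X, let H be a complex Hilbert space, and let {U_λ}_{λ∈I} be a family of subsets of X. For each pair (λ₀,λ₁) ∈ I×I, let v_{λ₀λ₁} be a U(H)-valued function defined on {(g,x) ∈ G×X : g⁻¹·x ∈ U_{λ₀}, x ∈ U_{λ₁}}, and for each λ ∈ I let w_λ : U_λ → U(H). Assume: (1) whenever h⁻¹g⁻¹·x ∈ U_{λ₀}, g⁻¹·x ∈ U_{λ₁}, x ∈ U_{λ₂}: v_{λ₁λ₂}(g,x)·v_{λ₀λ₁}(h, g⁻¹·x)·v_{λ₀λ₂}(hg,x)* = 1; (2) v_{λ₀λ₁}(e,x) = w_{λ₁}(x)·w_{λ₀}(x)* for all x ∈ U_{λ₀}∩U_{λ₁}. Then: (i) whenever g⁻¹·x ∈ U_{λ₀}∩U_{λ₀'} and x ∈ U_{λ₁}∩U_{λ₁'}: w_{λ₁}(x)*·v_{λ₀λ₁}(g,x)·w_{λ₀}(g⁻¹·x) = w_{λ₁'}(x)*·v_{λ₀'λ₁'}(g,x)·w_{λ₀'}(g⁻¹·x); and (ii)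 whenever h⁻¹g⁻¹·x ∈ U_{λ₀}, g⁻¹·x ∈ U_{λ₁}, x ∈ U_{λ₂}: [w_{λ₂}(x)*·v_{λ₁λ₂}(g,x)·w_{λ₁}(g⁻¹·x)]·[w_{λ₁}(g⁻¹·x)*·v_{λ₀λ₁}(h,g⁻¹·x)·w_{λ₀}(h⁻¹g⁻¹·x)] = w_{λ₂}(x)*·v_{λ₀λ₂}(gh,x)·w_{λ₀}(h⁻¹g⁻¹·x). -/
/-- Given unitary-valued transition data `v_{λ₀λ₁}(g,x)` on the
transformation groupoid of an abelian group action, satisfying the cocycle identity (1)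
and trivialized at the identity by unitaries `w_λ` via (2), the expression
`w_{λ₁}(x)* · v_{λ₀λ₁}(g,x) · w_{λ₀}(g⁻¹x)` is (i) independent of the choice of indices, and
(ii) a unitary 1-cocycle. -/
theorem exterior_equivalence_cocycle {G X H : Type*} [CommGroup G] [MulAction G X]
    [NormedAddCommGroup H] [InnerProductSpace ℂ H] [CompleteSpace H]
    {I : Type*} (U : I → Set X)
    (v : I → I → G → X → (H →L[ℂ] H)) (w : I → X → (H →L[ℂ] H))
    (hvu : ∀ (l0 l1 : I) (g : G) (x : X), g⁻¹ • x ∈ U l0 → x ∈ U l1 →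
      v l0 l1 g x ∈ unitary (H →L[ℂ] H))
    (hwu : ∀ (l : I) (x : X), x ∈ U l → w l x ∈ unitary (H →L[ℂ] H))
    (h1 : ∀ (l0 l1 l2 : I) (g h : G) (x : X),
      h⁻¹ • (g⁻¹ • x) ∈ U l0 → g⁻¹ • x ∈ U l1 → x ∈ U l2 →
      v l1 l2 g x * v l0 l1 h (g⁻¹ • x) * star (v l0 l2 (h * g) x) = 1)
    (h2 : ∀ (l0 l1 : I) (x : X), x ∈ U l0 → x ∈ U l1 →
      v l0 l1 1 x = w l1 x * star (w l0 x)) :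
    (∀ (l0 l1 l0' l1' : I) (g : G) (x : X),
      g⁻¹ • x ∈ U l0 → g⁻¹ • x ∈ U l0' → x ∈ U l1 → x ∈ U l1' →
      star (w l1 x) * v l0 l1 g x * w l0 (g⁻¹ • x) =
        star (w l1' x) * v l0' l1' g x * w l0' (g⁻¹ • x)) ∧
    (∀ (l0 l1 l2 : I) (g h : G) (x : X),
      h⁻¹ • (g⁻¹ • x) ∈ U l0 → g⁻¹ • x ∈ U l1 → x ∈ U l2 →
      (star (w l2 x) * v l1 l2 g x * w l1 (g⁻¹ • x)) *
          (star (w l1 (g⁻¹ • x)) * v l0 l1 h (g⁻¹ • x) * w l0 (h⁻¹ • (g⁻¹ • x))) =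
        star (w l2 x) * v l0 l2 (g * h) x * w l0 (h⁻¹ • (g⁻¹ • x))) := by
  have key : ∀ (l0 l1 l2 : I) (g h : G) (x : X),
      h⁻¹ • (g⁻¹ • x) ∈ U l0 → g⁻¹ • x ∈ U l1 → x ∈ U l2 →
      v l1 l2 g x * v l0 l1 h (g⁻¹ • x) = v l0 l2 (h * g) x := by
    intro l0 l1 l2 g h x h0 h1' h2'
    have hu := hvu l0 l2 (h * g) x
      (by simpa [← mul_smul, mul_inv_rev, mul_comm] using h0) h2'
    have hc := h1 l0 l1 l2 g h x h0 h1' h2'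
    calc v l1 l2 g x * v l0 l1 h (g⁻¹ • x)
        = v l1 l2 g x * v l0 l1 h (g⁻¹ • x) *
            (star (v l0 l2 (h * g) x) * v l0 l2 (h * g) x) := by
          rw [(Unitary.mem_iff.mp hu).1, mul_one]
      _ = (v l1 l2 g x * v l0 l1 h (g⁻¹ • x) * star (v l0 l2 (h * g) x)) *
            v l0 l2 (h * g) x := by simp only [mul_assoc]
      _ = v l0 l2 (h * g) x := by rw [hc, one_mul]
  constructor
  · intro l0 l1 l0' l1' g x hgx hgx' hx hx'
    -- change upper index l1 → l1'
    have k1 : v l1 l1' 1 x * v l0 l1 g x = v l0 l1' g x := by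
      have := key l0 l1 l1' 1 g x (by simpa using hgx) (by simpa using hx) hx'
      simpa using this
    have e1 : star (w l1' x) * v l0 l1' g x = star (w l1 x) * v l0 l1 g x := by
      rw [← k1, h2 l1 l1' x hx hx', ← mul_assoc, ← mul_assoc,
        (Unitary.mem_iff.mp (hwu l1' x hx')).1, one_mul]
    -- change lower index l0 → l0'
    have k2 : v l0' l1' g x * v l0 l0' 1 (g⁻¹ • x) = v l0 l1' g x := by
      have := key l0 l0' l1' g 1 x (by simpa using hgx) hgx' hx'
      simpa using this
    have e2 : v l0' l1' g x * w l0' (g⁻¹ • x) = v l0 l1' g x * w l0 (g⁻¹ • x) := by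
      rw [← k2, h2 l0 l0' (g⁻¹ • x) hgx hgx']
      simp only [mul_assoc, (Unitary.mem_iff.mp (hwu l0 (g⁻¹ • x) hgx)).1, mul_one]
    calc star (w l1 x) * v l0 l1 g x * w l0 (g⁻¹ • x)
        = star (w l1' x) * v l0 l1' g x * w l0 (g⁻¹ • x) := by rw [e1]
      _ = star (w l1' x) * (v l0 l1' g x * w l0 (g⁻¹ • x)) := by rw [mul_assoc]
      _ = star (w l1' x) * (v l0' l1' g x * w l0' (g⁻¹ • x)) := by rw [e2]
      _ = star (w l1' x) * v l0' l1' g x * w l0' (g⁻¹ • x) := by rw [mul_assoc]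
  · intro l0 l1 l2 g h x h0 h1' h2'
    have hw1 := (Unitary.mem_iff.mp (hwu l1 (g⁻¹ • x) h1')).2
    have k := key l0 l1 l2 g h x h0 h1' h2'
    calc (star (w l2 x) * v l1 l2 g x * w l1 (g⁻¹ • x)) *
          (star (w l1 (g⁻¹ • x)) * v l0 l1 h (g⁻¹ • x) * w l0 (h⁻¹ • (g⁻¹ • x)))
        = star (w l2 x) * (v l1 l2 g x *
            ((w l1 (g⁻¹ • x) * star (w l1 (g⁻¹ • x))) *
              (v l0 l1 h (g⁻¹ • x) * w l0 (h⁻¹ • (g⁻¹ • x))))) := by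
          simp only [mul_assoc]
      _ = star (w l2 x) * (v l1 l2 g x * v l0 l1 h (g⁻¹ • x)) *
            w l0 (h⁻¹ • (g⁻¹ • x)) := by rw [hw1, one_mul]; simp only [mul_assoc]
      _ = star (w l2 x) * v l0 l2 (g * h) x * w l0 (h⁻¹ • (g⁻¹ • x)) := by
          rw [k, mul_comm h g]
end

section
/- Let H be a complex Hilbert space, n ≥ 1, let a, b : ℤⁿ → U(H) be functions into the unitary group, let c : ℤⁿ × ℤⁿ → 𝕋 be modulus-1 scalars, and let w ∈ U(H). Assume a(l)·a(m) = c(m,l)·a(m+l) and b(l)·b(m) = c(m,l)·b(m+l) for all m, l ∈ ℤⁿ (with the same scalars c), and assume that for every m ∈ ℤⁿ the operator φ(m) := a(m)·w·b(m)*·w* is a scalar unitary t_m·1 with |t_m| = 1. Then m ↦ φ(m) is a homomorphism: φ(m+l) = φ(m)·φ(l) for all m, l ∈ ℤⁿ. -/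
/-- If `a, b : ℤⁿ → U(H)` satisfy the same Weyl relations
`a(l)·a(m) = c(m,l)·a(m+l)` and `b(l)·b(m) = c(m,l)·b(m+l)`, `w` is unitary, and each
`φ(m) := a(m)·w·b(m)*·w*` is a scalar unitary, then `φ` is a homomorphism:
`φ(m+l) = φ(m)·φ(l)`. -/
theorem scalar_valued_map_is_hom {H : Type*} [NormedAddCommGroup H]
    [InnerProductSpace ℂ H] [CompleteSpace H]
    (n : ℕ) (hn : 1 ≤ n)
    (a b : (Fin n → ℤ) → (H →L[ℂ] H)) (c : (Fin n → ℤ) → (Fin n → ℤ) → ℂ)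
    (w : H →L[ℂ] H)
    (ha : ∀ m, a m ∈ unitary (H →L[ℂ] H)) (hb : ∀ m, b m ∈ unitary (H →L[ℂ] H))
    (hw : w ∈ unitary (H →L[ℂ] H))
    (hc : ∀ m l, ‖c m l‖ = 1)
    (hac : ∀ m l, a l * a m = c m l • a (m + l))
    (hbc : ∀ m l, b l * b m = c m l • b (m + l))
    (hφ : ∀ m, ∃ t : ℂ, ‖t‖ = 1 ∧
      a m * w * star (b m) * star w = t • (1 : H →L[ℂ] H)) :
    ∀ m l, a (m + l) * w * star (b (m + l)) * star w =
      (a m * w * star (b m) * star w) * (a l * w * star (b l) * star w) := by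
  intro m l
  obtain ⟨tm, htm, hm⟩ := hφ m
  obtain ⟨tl, htl, hl⟩ := hφ l
  have hcnz : c m l ≠ 0 := fun h => by simpa [h] using hc m l
  have hconj : (starRingEnd ℂ) (c m l) = (c m l)⁻¹ := by
    rw [Complex.inv_eq_conj]
    exact hc m l
  have hA : a (m + l) = (c m l)⁻¹ • (a l * a m) := by
    rw [hac, smul_smul, inv_mul_cancel₀ hcnz, one_smul]
  have hB : b (m + l) = (c m l)⁻¹ • (b l * b m) := by
    rw [hbc, smul_smul, inv_mul_cancel₀ hcnz, one_smul]
  have hww : star w * w = 1 := hw.1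
  have key : a m * w * star (b m) = tm • w := by
    have := congrArg (· * w) hm
    simpa [mul_assoc, hww] using this
  rw [hA, hB]
  rw [hm, hl]
  rw [star_smul, star_mul]
  have hcc : (c m l)⁻¹ * (starRingEnd ℂ) ((c m l)⁻¹) = 1 := by
    rw [map_inv₀, hconj, inv_inv, inv_mul_cancel₀ hcnz]
  calc ((c m l)⁻¹ • (a l * a m)) * w *
        ((starRingEnd ℂ) ((c m l)⁻¹) • (star (b m) * star (b l))) * star w
      = ((c m l)⁻¹ * (starRingEnd ℂ) ((c m l)⁻¹)) •
        (a l * (a m * w * star (b m)) * star (b l) * star w) := by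
        simp only [smul_mul_assoc, mul_smul_comm, smul_smul]
        rw [mul_comm ((starRingEnd ℂ) (c m l)⁻¹)]
        simp [mul_assoc]
    _ = a l * (tm • w) * star (b l) * star w := by rw [hcc, one_smul, key]
    _ = tm • (a l * w * star (b l) * star w) := by
        simp only [mul_smul_comm, smul_mul_assoc]
    _ = tm • (tl • (1 : H →L[ℂ] H)) := by rw [hl]
    _ = (tm • (1 : H →L[ℂ] H)) * (tl • (1 : H →L[ℂ] H)) := by
        simp [smul_smul, mul_comm]
end

section
/- With notation and hypotheses as in the context, define, for λ₀, λ₁, λ₂ ∈ I, s, t ∈ ℝⁿ and x ∈ X: φ_{λ₀λ₁λ₂}(s,t,x) := φ²⁰_{λ₀λ₁λ₂}(π(x)) · φ¹¹_{λ₀λ₁}(m_{λ₁λ₂}(t,x), π(x)) · B(m_{λ₁λ₂}(t,x), m_{λ₀λ₁}(s,(−t)•x), π(x))⁻¹ · B(F_{λ₀λ₁λ₂}(π(x)), m_{λ₀λ₂}(s+t,x), π(x)). Then φ satisfies the Tu–Čech 2-cocycle identity: for all λ₀, λ₁, λ₂, λ₃ ∈ I, all r, s, t ∈ ℝⁿ,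 and all x ∈ X, φ_{λ₁λ₂λ₃}(s,t,x) · φ_{λ₀λ₂λ₃}(r+s,t,x)⁻¹ · φ_{λ₀λ₁λ₃}(r,s+t,x) · φ_{λ₀λ₁λ₂}(r,s,(−t)•x)⁻¹ = 1. -/
/-- `B(a,b,z) = ∏_{i<j} f_{ij}(z)^{aᵢ bⱼ}`, a 𝕋-valued biadditive pairing on `ℤⁿ`. -/
noncomputable def Bform {Z : Type*} (n : ℕ) (f : Fin n → Fin n → Z → Circle)
    (a b : Fin n → ℤ) (z : Z) : Circle :=
  ∏ i : Fin n, ∏ j : Fin n, if i < j then (f i j z) ^ (a i * b j) else 1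

lemma Bform_add_left {Z : Type*} (n : ℕ) (f : Fin n → Fin n → Z → Circle)
    (a b c : Fin n → ℤ) (z : Z) :
    Bform n f (a + b) c z = Bform n f a c z * Bform n f b c z := by
  unfold Bform
  rw [← Finset.prod_mul_distrib]
  refine Finset.prod_congr rfl fun i _ => ?_
  rw [← Finset.prod_mul_distrib]
  refine Finset.prod_congr rfl fun j _ => ?_
  by_cases h : i < j
  · simp [h, add_mul, zpow_add]
  · simp [h]

lemma Bform_add_right {Z : Type*} (n : ℕ) (f : Fin n → Fin n → Z → Circle)
    (a b c : Fin n → ℤ) (z : Z) :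
    Bform n f a (b + c) z = Bform n f a b z * Bform n f a c z := by
  unfold Bform
  rw [← Finset.prod_mul_distrib]
  refine Finset.prod_congr rfl fun i _ => ?_
  rw [← Finset.prod_mul_distrib]
  refine Finset.prod_congr rfl fun j _ => ?_
  by_cases h : i < j
  · simp [h, mul_add, zpow_add]
  · simp [h]

lemma Bform_neg_left {Z : Type*} (n : ℕ) (f : Fin n → Fin n → Z → Circle)
    (a c : Fin n → ℤ) (z : Z) :
    Bform n f (-a) c z = (Bform n f a c z)⁻¹ := by
  unfold Bform
  rw [← Finset.prod_inv_distrib]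
  refine Finset.prod_congr rfl fun i _ => ?_
  rw [← Finset.prod_inv_distrib]
  refine Finset.prod_congr rfl fun j _ => ?_
  by_cases h : i < j
  · simp [h, neg_mul, zpow_neg]
  · simp [h]

lemma Bform_neg_right {Z : Type*} (n : ℕ) (f : Fin n → Fin n → Z → Circle)
    (a c : Fin n → ℤ) (z : Z) :
    Bform n f a (-c) z = (Bform n f a c z)⁻¹ := by
  unfold Bform
  rw [← Finset.prod_inv_distrib]
  refine Finset.prod_congr rfl fun i _ => ?_
  rw [← Finset.prod_inv_distrib]
  refine Finset.prod_congr rfl fun j _ => ?_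
  by_cases h : i < j
  · simp [h, mul_neg, zpow_neg]
  · simp [h]

/-- Abstract version of the Tu–Čech cocycle computation, in an arbitrary commutative
group `G` with a biadditive pairing `β` on an abelian group `V`. -/
lemma tu_aux {V G : Type*} [AddCommGroup V] [CommGroup G]
    (β : V → V → G)
    (βal : ∀ a b c : V, β (a + b) c = β a c * β b c)
    (βar : ∀ a b c : V, β a (b + c) = β a b * β a c)
    (βnl : ∀ a b : V, β (-a) b = (β a b)⁻¹)
    (βnr : ∀ a b : V, β a (-b) = (β a b)⁻¹)
    {A P Q S1 S0 R F0 F1 F2 F3 : V}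
    {p123 p023 p013 p012 q12A q02A q01A q01S1 q01P q01F3 : G}
    (hA' : p123 * p023⁻¹ * p013 * p012⁻¹ = q01F3 * β F0 F2 * (β F3 F1)⁻¹)
    (hB' : q12A * q02A⁻¹ * q01A = (β F0 A)⁻¹ * β A F0)
    (hq : q01P * q01A = q01S1 * q01F3)
    (hS1 : S1 = P + A - F3) (hS0 : S0 = Q + A - F2)
    (hR : R = S0 + F1 - S1) (hF0 : F0 = R + P - Q) :
    p123 * q12A * (β A P)⁻¹ * β F3 S1 *
      (p023 * q02A * (β A Q)⁻¹ * β F2 S0)⁻¹ *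
      (p013 * q01S1 * (β S1 R)⁻¹ * β F1 S0) *
      (p012 * q01P * (β P R)⁻¹ * β F0 Q)⁻¹ = 1 := by
  have hq' : q01S1 = q01P * q01A * q01F3⁻¹ := eq_mul_inv_of_mul_eq hq.symm
  calc p123 * q12A * (β A P)⁻¹ * β F3 S1 *
      (p023 * q02A * (β A Q)⁻¹ * β F2 S0)⁻¹ *
      (p013 * q01S1 * (β S1 R)⁻¹ * β F1 S0) *
      (p012 * q01P * (β P R)⁻¹ * β F0 Q)⁻¹
      = (p123 * p023⁻¹ * p013 * p012⁻¹) * (q12A * q02A⁻¹ * q01A) *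
        (q01S1 * (q01A * q01P)⁻¹) *
        ((β A P)⁻¹ * β F3 S1 * β A Q * (β F2 S0)⁻¹ * (β S1 R)⁻¹ * β F1 S0 *
          β P R * (β F0 Q)⁻¹) := by
        apply Additive.ofMul.injective
        simp only [ofMul_mul, ofMul_inv]
        abel
    _ = 1 := by
        rw [hA', hB', hq', hF0, hR, hS0, hS1]
        simp only [sub_eq_add_neg, βal, βar, βnl, βnr]
        apply Additive.ofMul.injective
        simp only [ofMul_mul, ofMul_inv, ofMul_one]
        abel

/-- The Tu–Čech 2-cochain built from a dimensionally reduced cocycle `(φ²⁰, φ¹¹, f)`: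
`φ_{λ₀λ₁λ₂}(s,t,x) = φ²⁰_{λ₀λ₁λ₂}(πx) · φ¹¹_{λ₀λ₁}(m_{λ₁λ₂}(t,x), πx) ·
B(m_{λ₁λ₂}(t,x), m_{λ₀λ₁}(s,(−t)•x), πx)⁻¹ · B(F_{λ₀λ₁λ₂}(πx), m_{λ₀λ₂}(s+t,x), πx)`. -/
noncomputable def TuPhi {X Z I : Type*} (n : ℕ) [AddAction (Fin n → ℝ) X] (π : X → Z)
    (F : I → I → I → Z → Fin n → ℤ) (mm : I → I → (Fin n → ℝ) → X → Fin n → ℤ)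
    (f : Fin n → Fin n → Z → Circle)
    (φ20 : I → I → I → Z → Circle) (φ11 : I → I → (Fin n → ℤ) → Z → Circle)
    (l0 l1 l2 : I) (s t : Fin n → ℝ) (x : X) : Circle :=
  φ20 l0 l1 l2 (π x) * φ11 l0 l1 (mm l1 l2 t x) (π x) *
    (Bform n f (mm l1 l2 t x) (mm l0 l1 s ((-t) +ᵥ x)) (π x))⁻¹ *
    Bform n f (F l0 l1 l2 (π x)) (mm l0 l2 (s + t) x) (π x)

/-- The cochain `TuPhi` built from a cocycle of the dimensionally reduced
complex satisfies the Tu–Čech 2-cocycle identity on the transformation groupoid `ℝⁿ ⋉ X`. -/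
theorem TuPhi_is_two_cocycle {X Z I : Type*} (n : ℕ) (hn : 1 ≤ n)
    [AddAction (Fin n → ℝ) X]
    (π : X → Z) (hπ : ∀ (t : Fin n → ℝ) (x : X), π (t +ᵥ x) = π x)
    (F : I → I → I → Z → Fin n → ℤ)
    (hF : ∀ (l0 l1 l2 l3 : I) (z : Z),
      F l1 l2 l3 z - F l0 l2 l3 z + F l0 l1 l3 z - F l0 l1 l2 z = 0)
    (mm : I → I → (Fin n → ℝ) → X → Fin n → ℤ)
    (hm : ∀ (l0 l1 l2 : I) (s t : Fin n → ℝ) (x : X),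
      mm l0 l1 s ((-t) +ᵥ x) + mm l1 l2 t x = mm l0 l2 (s + t) x + F l0 l1 l2 (π x))
    (f : Fin n → Fin n → Z → Circle)
    (φ20 : I → I → I → Z → Circle) (φ11 : I → I → (Fin n → ℤ) → Z → Circle)
    (hadd : ∀ (l0 l1 : I) (a b : Fin n → ℤ) (z : Z),
      φ11 l0 l1 (a + b) z = φ11 l0 l1 a z * φ11 l0 l1 b z)
    (hA : ∀ (l0 l1 l2 l3 : I) (z : Z),
      φ20 l1 l2 l3 z * (φ20 l0 l2 l3 z)⁻¹ * φ20 l0 l1 l3 z * (φ20 l0 l1 l2 z)⁻¹ =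
        φ11 l0 l1 (F l1 l2 l3 z) z * Bform n f (F l0 l1 l2 z) (F l0 l2 l3 z) z *
          (Bform n f (F l1 l2 l3 z) (F l0 l1 l3 z) z)⁻¹)
    (hB : ∀ (l0 l1 l2 : I) (a : Fin n → ℤ) (z : Z),
      φ11 l1 l2 a z * (φ11 l0 l2 a z)⁻¹ * φ11 l0 l1 a z =
        (Bform n f (F l0 l1 l2 z) a z)⁻¹ * Bform n f a (F l0 l1 l2 z) z) :
    ∀ (l0 l1 l2 l3 : I) (r s t : Fin n → ℝ) (x : X),
      TuPhi n π F mm f φ20 φ11 l1 l2 l3 s t x *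
          (TuPhi n π F mm f φ20 φ11 l0 l2 l3 (r + s) t x)⁻¹ *
          TuPhi n π F mm f φ20 φ11 l0 l1 l3 r (s + t) x *
          (TuPhi n π F mm f φ20 φ11 l0 l1 l2 r s ((-t) +ᵥ x))⁻¹ = 1 := by
  intro l0 l1 l2 l3 r s t x
  have hv : (-s : Fin n → ℝ) +ᵥ ((-t) +ᵥ x) = (-(s + t)) +ᵥ x := by
    rw [vadd_vadd, ← neg_add]
  have hq : φ11 l0 l1 (mm l1 l2 s ((-t) +ᵥ x)) (π x) * φ11 l0 l1 (mm l2 l3 t x) (π x) =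
      φ11 l0 l1 (mm l1 l3 (s + t) x) (π x) * φ11 l0 l1 (F l1 l2 l3 (π x)) (π x) := by
    rw [← hadd, ← hadd, hm l1 l2 l3 s t x]
  have hS1 : mm l1 l3 (s + t) x =
      mm l1 l2 s ((-t) +ᵥ x) + mm l2 l3 t x - F l1 l2 l3 (π x) :=
    eq_sub_of_add_eq (hm l1 l2 l3 s t x).symm
  have hS0 : mm l0 l3 (r + s + t) x =
      mm l0 l2 (r + s) ((-t) +ᵥ x) + mm l2 l3 t x - F l0 l2 l3 (π x) :=
    eq_sub_of_add_eq (hm l0 l2 l3 (r + s) t x).symm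
  have hR : mm l0 l1 r ((-(s + t)) +ᵥ x) =
      mm l0 l3 (r + s + t) x + F l0 l1 l3 (π x) - mm l1 l3 (s + t) x := by
    have h := hm l0 l1 l3 r (s + t) x
    rw [← add_assoc] at h
    exact eq_sub_of_add_eq h
  have hF0 : F l0 l1 l2 (π x) =
      mm l0 l1 r ((-(s + t)) +ᵥ x) + mm l1 l2 s ((-t) +ᵥ x) -
        mm l0 l2 (r + s) ((-t) +ᵥ x) := by
    have h := hm l0 l1 l2 r s ((-t) +ᵥ x)
    rw [hv, hπ] at h
    have h2 : F l0 l1 l2 (π x) + mm l0 l2 (r + s) ((-t) +ᵥ x) =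
        mm l0 l1 r ((-(s + t)) +ᵥ x) + mm l1 l2 s ((-t) +ᵥ x) := by
      rw [add_comm]; exact h.symm
    exact eq_sub_of_add_eq h2
  simp only [TuPhi, hv, hπ, ← add_assoc]
  exact tu_aux (fun a b => Bform n f a b (π x))
    (fun a b c => Bform_add_left n f a b c (π x))
    (fun a b c => Bform_add_right n f a b c (π x))
    (fun a b => Bform_neg_left n f a b (π x))
    (fun a b => Bform_neg_right n f a b (π x))
    (hA l0 l1 l2 l3 (π x)) (hB l0 l1 l2 (mm l2 l3 t x) (π x)) hq hS1 hS0 hR hF0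
end

section
/- Let n ≥ 1, let I be an index set, let s : I × I → ℝⁿ be any family of vectors, and let g_{ij} ∈ ℝ for 1 ≤ i < j ≤ n. Write (δs)_{λ₀λ₁λ₂} := s_{λ₀λ₁} + s_{λ₁λ₂} − s_{λ₀λ₂} ∈ ℝⁿ, and define h_{λ₀λ₁λ₂} := Σ_{1≤i<j≤n} g_{ij}·((s_{λ₀λ₁})_i·(s_{λ₁λ₂})_j − ((δs)_{λ₀λ₁λ₂})_i·(s_{λ₀λ₂})_j). Then for all λ₀, λ₁, λ₂, λ₃ ∈ I: h_{λ₁λ₂λ₃} − h_{λ₀λ₂λ₃} + h_{λ₀λ₁λ₃} − h_{λ₀λ₁λ₂} = Σ_{1≤i<j≤n} g_{ij}·[ ((δs)_{λ₀λ₁λ₂})_i·((δs)_{λ₀λ₂λ₃})_j − ((δs)_{λ₁λ₂λ₃})_i·((δs)_{λ₀λ₁λ₃})_j + ((δs)_{λ₁λ₂λ₃})_i·(s_{λ₀λ₁})_j − (s_{λ₀λ₁})_i·((δs)_{λ₁λ₂λ₃})_j ]. -/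
/-- The Čech coboundary of the 1-cochain `s` on triples:
`(δs)_{λ₀λ₁λ₂} = s_{λ₀λ₁} + s_{λ₁λ₂} − s_{λ₀λ₂}`. -/
def cechDs {I : Type*} {n : ℕ} (s : I → I → Fin n → ℝ) (a b c : I) : Fin n → ℝ :=
  s a b + s b c - s a c

/-- The 2-cochain
`h_{λ₀λ₁λ₂} = Σ_{i<j} g_{ij}·((s_{λ₀λ₁})ᵢ·(s_{λ₁λ₂})ⱼ − ((δs)_{λ₀λ₁λ₂})ᵢ·(s_{λ₀λ₂})ⱼ)`. -/
def hForm {I : Type*} {n : ℕ} (g : Fin n → Fin n → ℝ) (s : I → I → Fin n → ℝ)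
    (a b c : I) : ℝ :=
  ∑ i : Fin n, ∑ j : Fin n,
    if i < j then g i j * (s a b i * s b c j - cechDs s a b c i * s a c j) else 0

/-- The explicit Čech-differential formula for `h` from the proof of
Lemma 8.13 of the paper. -/
theorem cech_coboundary_hForm (n : ℕ) (hn : 1 ≤ n) {I : Type*}
    (s : I → I → Fin n → ℝ) (g : Fin n → Fin n → ℝ) :
    ∀ l0 l1 l2 l3 : I,
      hForm g s l1 l2 l3 - hForm g s l0 l2 l3 + hForm g s l0 l1 l3 - hForm g s l0 l1 l2 =
        ∑ i : Fin n, ∑ j : Fin n,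
          if i < j then
            g i j *
              (cechDs s l0 l1 l2 i * cechDs s l0 l2 l3 j -
                cechDs s l1 l2 l3 i * cechDs s l0 l1 l3 j +
                cechDs s l1 l2 l3 i * s l0 l1 j -
                s l0 l1 i * cechDs s l1 l2 l3 j)
          else 0 := by
  intro l0 l1 l2 l3
  unfold hForm
  rw [← Finset.sum_sub_distrib, ← Finset.sum_add_distrib, ← Finset.sum_sub_distrib]
  refine Finset.sum_congr rfl fun i _ => ?_
  rw [← Finset.sum_sub_distrib, ← Finset.sum_add_distrib, ← Finset.sum_sub_distrib]
  refine Finset.sum_congr rfl fun j _ => ?_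
  by_cases h : i < j <;> simp [h, cechDs] <;> ring
end
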